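/- Let d be a positive integer and let λ = (λ_1, …, λ_d) be a vector with strictly positive entries. Let (T_n) be a sequence of real-valued random variables converging in distribution to Σ_{j=1}^d λ_j Z_j², where Z_1, …, Z_d are independent standard normal random variables, and let (λ̂_n) be a sequence of random vectors in ℝ^d converging in probability to λ. Define p̂_n = 1 − H(T_n; λ̂_n). Then p̂_n converges in distribution to the uniform distribution on [0,1]. -/

import Mathlib

open MeasureTheory ProbabilityTheory Filter

/-- The product of `d` independent standard normal distributions. -/
noncomputable def stdGaussPi (d : ℕ) : Measure (Fin d → ℝ) :=
  Measure.pi fun _ => gaussianReal 0 1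

/-- `mixCDF d lam q = H(q; λ) = P(∑ j, λ_j Z_j² ≤ q)` for `Z_1, …, Z_d` IID standard normal. -/
noncomputable def mixCDF (d : ℕ) (lam : Fin d → ℝ) (q : ℝ) : ℝ :=
  (stdGaussPi d {z | ∑ j, lam j * z j ^ 2 ≤ q}).toReal

/-- The law of the weighted chi-square mixture `∑ j, λ_j Z_j²`. -/
noncomputable def mixLaw (d : ℕ) (lam : Fin d → ℝ) : Measure ℝ :=
  (stdGaussPi d).map fun z => ∑ j, lam j * z j ^ 2

/-!
A weighted chi-square law with positive weights has no atoms (slice the level sets of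
`∑ λ_j z_j²` along one Gaussian coordinate: every slice is finite), so its CDF `F` is continuous
and `1 - F(X)` is uniform on `[0, 1]`; by the continuous mapping theorem `1 - F(T_n)` converges to
the uniform law. If `r λ ≤ λ'` and `r λ' ≤ λ` then `H(·; λ')` is squeezed between `F(r ·)` and
`F(· / r)`, and `F(q / r) - F(r q)` is uniformly small for `r` near `1`, because `F` is uniformly
continuous on compacts and has a limit at infinity. Hence `H(·; λ') → F` uniformly as `λ' → λ`,
so `H(T_n; λ̂_n) - F(T_n) → 0` in probability and Slutsky's lemma concludes.
-/

open Set Topology BoundedContinuousFunction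

namespace ProbabilityTheory

variable {μ : Measure ℝ} [IsProbabilityMeasure μ] [NullSingletonClass μ]

lemma continuous_cdf : Continuous (cdf μ) := by
  refine continuous_iff_continuousAt.2 fun x => ?_
  rw [(monotone_cdf μ).continuousAt_iff_leftLim_eq_rightLim,
    StieltjesFunction.rightLim_eq]
  have hjump := (cdf μ).measure_singleton x
  rw [measure_cdf, measure_singleton, eq_comm, ENNReal.ofReal_eq_zero, sub_nonpos] at hjump
  exact le_antisymm ((monotone_cdf μ).leftLim_le le_rfl) hjump

lemma measure_cdf_le {t : ℝ} (ht0 : 0 ≤ t) (ht1 : t < 1) :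
    μ {x | cdf μ x ≤ t} = ENNReal.ofReal t := by
  set A := {x | cdf μ x ≤ t}
  rcases A.eq_empty_or_nonempty with hA | hA
  · have : t ≤ 0 := ge_of_tendsto (tendsto_cdf_atBot μ) (.of_forall fun x =>
      (not_le.1 fun hx => eq_empty_iff_forall_notMem.1 hA x hx).le)
    simp [hA, le_antisymm this ht0]
  obtain ⟨x₀, hx₀⟩ := ((tendsto_cdf_atTop μ).eventually (lt_mem_nhds ht1)).exists_forall_of_atTop
  have hbdd : BddAbove A := ⟨x₀, fun x hx => le_of_not_ge fun h => (hx₀ x h).not_ge hx⟩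
  set b := sSup A
  have hbA : b ∈ A := (isClosed_le continuous_cdf continuous_const).csSup_mem hA hbdd
  have hAb : A = Iic b :=
    Subset.antisymm (fun x hx => le_csSup hbdd hx) fun x hx => (monotone_cdf μ hx).trans hbA
  have hcdf : cdf μ b = t := by
    refine le_antisymm hbA (not_lt.1 fun hlt => ?_)
    obtain ⟨x, hxA, hbx⟩ := ((continuous_cdf.continuousAt.eventually (gt_mem_nhds hlt)).filter_mono
      nhdsWithin_le_nhds |>.and (self_mem_nhdsWithin (s := Ioi b))).exists
    exact (le_csSup hbdd (le_of_lt hxA : x ∈ A)).not_gt hbx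
  rw [hAb, ← ofReal_cdf, hcdf]

lemma map_cdf : μ.map (cdf μ) = volume.restrict (Icc 0 1) := by
  have hmeas : Measurable (cdf μ) := (monotone_cdf μ).measurable
  have : IsFiniteMeasure (volume.restrict (Icc (0 : ℝ) 1)) :=
    isFiniteMeasure_restrict.2 measure_Icc_lt_top.ne
  refine Measure.ext_of_Iic _ _ fun t => ?_
  rw [Measure.map_apply hmeas measurableSet_Iic, Measure.restrict_apply measurableSet_Iic]
  change μ {x | cdf μ x ≤ t} = _
  rcases lt_or_ge t 0 with ht0 | ht0
  · have hempty : {x | cdf μ x ≤ t} = ∅ :=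
      eq_empty_of_forall_notMem fun x hx => (hx.trans_lt ht0).not_ge (cdf_nonneg μ x)
    have : Iic t ∩ Icc 0 1 = ∅ :=
      (disjoint_left.2 fun x hx hx' => (hx.trans_lt ht0).not_ge hx'.1).inter_eq
    simp [hempty, this]
  rcases lt_or_ge t 1 with ht1 | ht1
  · have : Iic t ∩ Icc 0 1 = Icc 0 t := by
      rw [inter_comm, ← Ici_inter_Iic, inter_assoc, Iic_inter_Iic, min_eq_right ht1.le,
        Ici_inter_Iic]
    rw [measure_cdf_le ht0 ht1, this, Real.volume_Icc, sub_zero]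
  · have huniv : {x | cdf μ x ≤ t} = univ :=
      eq_univ_of_forall fun x => (cdf_le_one μ x).trans ht1
    rw [huniv, inter_eq_right.2 (Icc_subset_Iic_self.trans (Iic_subset_Iic.2 ht1))]
    simp

lemma map_one_sub_cdf : μ.map (fun x => 1 - cdf μ x) = volume.restrict (Icc 0 1) := by
  have hreflect := ((volume : Measure ℝ).measurePreserving_sub_left 1).restrict_preimage
    (measurableSet_Icc (a := (0 : ℝ)) (b := 1))
  rw [preimage_const_sub_Icc, sub_zero, sub_self] at hreflect
  rw [← hreflect.map_eq, ← map_cdf (μ := μ),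
    Measure.map_map hreflect.measurable (monotone_cdf μ).measurable]
  rfl

end ProbabilityTheory

instance (d : ℕ) : IsProbabilityMeasure (stdGaussPi d) := by
  unfold stdGaussPi; infer_instance

lemma finite_setOf_mul_sq_eq {a : ℝ} (ha : a ≠ 0) (c : ℝ) : {x : ℝ | a * x ^ 2 = c}.Finite := by
  refine (finite_singleton √(c / a)).insert (-√(c / a)) |>.subset fun x hx => ?_
  have hsq : √(c / a) = |x| := by
    rw [← Real.sqrt_sq_eq_abs, ← (eq_div_iff ha).2 ((mul_comm _ _).trans hx)]
  rcases abs_choice x with h | h <;> simp [hsq, h]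

lemma stdGaussPi_setOf_sum_mul_sq_eq_eq_zero {d : ℕ} {lam : Fin d → ℝ} {j : Fin d} (hj : lam j ≠ 0)
    (c : ℝ) : stdGaussPi d {z | ∑ i, lam i * z i ^ 2 = c} = 0 := by
  obtain ⟨n, rfl⟩ := Nat.exists_eq_succ_of_ne_zero j.pos.ne'
  have hsplit := measurePreserving_piFinSuccAbove (fun _ : Fin (n + 1) => gaussianReal 0 1) j
  set S : Set (ℝ × (Fin n → ℝ)) :=
    {p | lam j * p.1 ^ 2 + ∑ i, lam (j.succAbove i) * p.2 i ^ 2 = c}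
  have hS : MeasurableSet S := measurableSet_eq_fun (by fun_prop) measurable_const
  have hpre : {z : Fin (n + 1) → ℝ | ∑ i, lam i * z i ^ 2 = c} =
      MeasurableEquiv.piFinSuccAbove (fun _ => ℝ) j ⁻¹' S := by
    ext z
    simp [S, Fin.sum_univ_succAbove _ j, Fin.removeNth]
  have : NullSingletonClass (gaussianReal 0 1) := nullSingletonClass_gaussianReal one_ne_zero
  rw [hpre, stdGaussPi, hsplit.measure_preimage hS.nullMeasurableSet,
    Measure.prod_apply_symm hS]
  have hslice (y : Fin n → ℝ) : gaussianReal 0 1 ((·, y) ⁻¹' S) = 0 := by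
    refine measure_mono_null (fun x hx => ?_)
      ((finite_setOf_mul_sq_eq hj (c - ∑ i, lam (j.succAbove i) * y i ^ 2)).measure_zero _)
    simp only [S, mem_preimage, mem_ofPred_eq] at hx ⊢
    linarith
  simp [hslice]

section MixLaw

variable {d : ℕ} {lam lam' : Fin d → ℝ}

instance : IsProbabilityMeasure (mixLaw d lam) :=
  Measure.isProbabilityMeasure_map (Measurable.aemeasurable (by fun_prop))

lemma mixCDF_eq_cdf : mixCDF d lam = cdf (mixLaw d lam) := by
  ext q
  rw [cdf_eq_real, measureReal_def, mixLaw, Measure.map_apply (by fun_prop) measurableSet_Iic]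
  rfl

lemma nullSingletonClass_mixLaw {j : Fin d} (hj : lam j ≠ 0) :
    NullSingletonClass (mixLaw d lam) where
  measure_singleton c := by
    rw [mixLaw, Measure.map_apply (by fun_prop) (measurableSet_singleton c)]
    exact stdGaussPi_setOf_sum_mul_sq_eq_eq_zero hj c

lemma mixCDF_le_mixCDF_div {c : ℝ} (hc : 0 < c) (h : ∀ j, c * lam j ≤ lam' j) (q : ℝ) :
    mixCDF d lam' q ≤ mixCDF d lam (q / c) := by
  refine ENNReal.toReal_mono (measure_ne_top _ _) (measure_mono fun z hz => ?_)
  simp only [mem_ofPred_eq] at hz ⊢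
  rw [le_div_iff₀' hc, Finset.mul_sum]
  refine le_trans (Finset.sum_le_sum fun j _ => ?_) hz
  rw [← mul_assoc]
  exact mul_le_mul_of_nonneg_right (h j) (sq_nonneg _)

lemma mixCDF_of_neg (hlam : ∀ j, 0 ≤ lam j) {q : ℝ} (hq : q < 0) : mixCDF d lam q = 0 := by
  have : {z : Fin d → ℝ | ∑ j, lam j * z j ^ 2 ≤ q} = ∅ :=
    eq_empty_of_forall_notMem fun z hz =>
      (Finset.sum_nonneg fun j _ => mul_nonneg (hlam j) (sq_nonneg (z j))).not_gt (hz.trans_lt hq)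
  simp [mixCDF, this]

lemma measurable_mixCDF : Measurable fun p : (Fin d → ℝ) × ℝ => mixCDF d p.1 p.2 :=
  have hS : MeasurableSet
      {p : ((Fin d → ℝ) × ℝ) × (Fin d → ℝ) | ∑ j, p.1.1 j * p.2 j ^ 2 ≤ p.1.2} :=
    measurableSet_le (by fun_prop) (by fun_prop)
  (measurable_measure_prodMk_left (ν := stdGaussPi d) hS).ennreal_toReal

end MixLaw

lemma Monotone.exists_map_div_sub_map_mul_le {F : ℝ → ℝ} (hmono : Monotone F)
    (hF : Continuous F) {L : ℝ} (hL : Tendsto F atTop (𝓝 L)) {δ : ℝ} (hδ : 0 < δ) :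
    ∃ r ∈ Ioo (0 : ℝ) 1, ∀ q, 0 ≤ q → F (q / r) - F (r * q) ≤ δ := by
  obtain ⟨M, hFM, hM⟩ :=
    ((hL.eventually (lt_mem_nhds (sub_lt_self L hδ))).and (eventually_gt_atTop 0)).exists
  obtain ⟨ρ, hρ, hUC⟩ := Metric.uniformContinuousOn_iff.1
    ((isCompact_Icc (a := 0) (b := 4 * M)).uniformContinuousOn_of_continuous hF.continuousOn) δ hδ
  have hwidth : ContinuousAt (fun r : ℝ => 2 * M * (1 / r - r)) 1 := by fun_prop (disch := norm_num)
  obtain ⟨r, ⟨hr2, hrρ⟩, hr1⟩ := (((eventually_gt_nhds (by norm_num : (1 / 2 : ℝ) < 1)).and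
    (hwidth.eventually (gt_mem_nhds (by simpa using hρ)))).filter_mono nhdsWithin_le_nhds |>.and
    (self_mem_nhdsWithin (s := Iio (1 : ℝ)))).exists
  have hr0 : 0 < r := by linarith
  refine ⟨r, ⟨hr0, hr1⟩, fun q hq => ?_⟩
  rcases le_or_gt M (r * q) with hMq | hqM
  · linarith [hmono.ge_of_tendsto hL (q / r), hmono hMq]
  have hq2 : q < 2 * M := by nlinarith
  have hslack : 0 ≤ 1 / r - r := by
    rw [sub_nonneg, le_div_iff₀ hr0]; nlinarith
  have hgap : q / r - r * q = q * (1 / r - r) := by ring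
  have hqr : q / r ≤ 2 * q := by rw [div_le_iff₀ hr0]; nlinarith
  have hclose := hUC (q / r) ⟨div_nonneg hq hr0.le, by linarith⟩ (r * q)
    ⟨by positivity, by linarith⟩ (by
      rw [Real.dist_eq, abs_of_nonneg (by nlinarith), hgap]
      nlinarith)
  linarith [le_abs_self (F (q / r) - F (r * q)), (Real.dist_eq _ _).symm.trans_lt hclose]

theorem tendstoUniformly_mixCDF {d : ℕ} (hd : 0 < d) {lam : Fin d → ℝ} (hlam : ∀ j, 0 < lam j) :
    TendstoUniformly (fun lam' => mixCDF d lam') (mixCDF d lam) (𝓝 lam) := by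
  have : NullSingletonClass (mixLaw d lam) := nullSingletonClass_mixLaw (hlam ⟨0, hd⟩).ne'
  have hmono : Monotone (mixCDF d lam) := mixCDF_eq_cdf ▸ monotone_cdf _
  rw [Metric.tendstoUniformly_iff]
  intro δ hδ
  obtain ⟨r, ⟨hr0, hr1⟩, hgap⟩ := hmono.exists_map_div_sub_map_mul_le
    (mixCDF_eq_cdf ▸ continuous_cdf) (mixCDF_eq_cdf ▸ tendsto_cdf_atTop _) (half_pos hδ)
  have hnear : ∀ᶠ lam' in 𝓝 lam, ∀ j, r * lam j < lam' j ∧ r * lam' j < lam j :=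
    eventually_all.2 fun j =>
      ((continuous_apply j).tendsto lam).eventually (lt_mem_nhds (by nlinarith [hlam j])) |>.and
      (((by fun_prop : Continuous fun x : Fin d → ℝ => r * x j).tendsto lam).eventually
        (gt_mem_nhds (by nlinarith [hlam j])))
  filter_upwards [hnear] with lam' hlam' q
  rw [dist_comm, Real.dist_eq]
  rcases lt_or_ge q 0 with hq | hq
  · rw [mixCDF_of_neg (fun j => (hlam j).le) hq,
      mixCDF_of_neg (fun j => by nlinarith [hlam j, hlam' j]) hq]
    simpa using hδ
  have hlower : mixCDF d lam (r * q) ≤ mixCDF d lam' q := by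
    simpa [hr0.ne'] using mixCDF_le_mixCDF_div hr0 (fun j => (hlam' j).2.le) (r * q)
  have hupper := mixCDF_le_mixCDF_div hr0 (fun j => (hlam' j).1.le) q
  have hrq : r * q ≤ q := by nlinarith
  have hqr : q ≤ q / r := by rw [le_div_iff₀ hr0]; nlinarith
  have := hgap q hq
  rw [abs_sub_lt_iff]
  constructor <;> linarith [hmono hrq, hmono hqr]

lemma TendstoUniformly.tendstoInMeasure_sub {Ω ι α E F : Type*} [MeasurableSpace Ω]
    {μ : Measure Ω} {l : Filter ι} [PseudoMetricSpace E] [SeminormedAddCommGroup F]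
    {G : E → α → F} {g : α → F} {c : E} (hG : TendstoUniformly G g (𝓝 c))
    {Y : ι → Ω → E} (hY : TendstoInMeasure μ Y l fun _ => c) (T : ι → Ω → α) :
    TendstoInMeasure μ (fun i ω => G (Y i ω) (T i ω) - g (T i ω)) l 0 := by
  rw [tendstoInMeasure_iff_dist] at hY
  rw [tendstoInMeasure_iff_norm]
  intro ε hε
  obtain ⟨η, hη, hball⟩ := Metric.eventually_nhds_iff.1 (Metric.tendstoUniformly_iff.1 hG ε hε)
  refine tendsto_of_tendsto_of_tendsto_of_le_of_le tendsto_const_nhds (hY η hη)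
    (fun _ => bot_le) fun i => measure_mono fun ω hω => ?_
  simp only [Pi.zero_apply, sub_zero, mem_ofPred_eq] at hω ⊢
  by_contra! h
  have := hball h (T i ω)
  rw [dist_comm, dist_eq_norm] at this
  exact this.not_ge hω

lemma tendstoInDistribution_iff_forall_integral_tendsto {Ω Ω' ι E : Type*}
    [MeasurableSpace Ω] [MeasurableSpace Ω'] [TopologicalSpace E] [MeasurableSpace E]
    [OpensMeasurableSpace E] {μ : Measure Ω} [IsProbabilityMeasure μ] {μ' : Measure Ω'}
    [IsProbabilityMeasure μ'] {X : ι → Ω → E} {Z : Ω' → E} {l : Filter ι}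
    (hX : ∀ i, AEMeasurable (X i) μ) (hZ : AEMeasurable Z μ') :
    TendstoInDistribution X l Z (fun _ => μ) μ' ↔
      ∀ g : E →ᵇ ℝ, Tendsto (fun i => ∫ ω, g (X i ω) ∂μ) l (𝓝 (∫ ω, g (Z ω) ∂μ')) := by
  have key (g : E →ᵇ ℝ) : Tendsto (fun i => ∫ x, g x ∂(μ.map (X i))) l (𝓝 (∫ x, g x ∂(μ'.map Z)))
      ↔ Tendsto (fun i => ∫ ω, g (X i ω) ∂μ) l (𝓝 (∫ ω, g (Z ω) ∂μ')) := by
    simp only [integral_map (hX _) g.continuous.aestronglyMeasurable,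
      integral_map hZ g.continuous.aestronglyMeasurable]
  simp_rw [← key]
  exact ⟨fun h => ProbabilityMeasure.tendsto_iff_forall_integral_tendsto.1 h.tendsto,
    fun h => ⟨hX, hZ, ProbabilityMeasure.tendsto_iff_forall_integral_tendsto.2 h⟩⟩

theorem stmt2 {Ω : Type*} [MeasurableSpace Ω] (P : Measure Ω) [IsProbabilityMeasure P]
    (d : ℕ) (hd : 0 < d) (lam : Fin d → ℝ) (hlam : ∀ j, 0 < lam j)
    (T : ℕ → Ω → ℝ) (hT : ∀ n, Measurable (T n))
    (hTdist : ∀ g : BoundedContinuousFunction ℝ ℝ,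
      Tendsto (fun n => ∫ ω, g (T n ω) ∂P) atTop (nhds (∫ x, g x ∂(mixLaw d lam))))
    (lamHat : ℕ → Ω → Fin d → ℝ) (hlamHat : ∀ n, Measurable (lamHat n))
    (hprob : ∀ ε > 0, Tendsto (fun n => P {ω | ε < ‖lamHat n ω - lam‖}) atTop (nhds 0)) :
    ∀ g : BoundedContinuousFunction ℝ ℝ,
      Tendsto (fun n => ∫ ω, g (1 - mixCDF d (lamHat n ω) (T n ω)) ∂P) atTop
        (nhds (∫ x in Set.Icc (0 : ℝ) 1, g x)) := by
  have : NullSingletonClass (mixLaw d lam) := nullSingletonClass_mixLaw (hlam ⟨0, hd⟩).ne'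
  have hY : ∀ n, AEMeasurable (fun ω => 1 - mixCDF d (lamHat n ω) (T n ω)) P := fun n =>
    (measurable_const.sub (measurable_mixCDF.comp ((hlamHat n).prodMk (hT n)))).aemeasurable
  have hTlim : TendstoInDistribution T atTop id (fun _ => P) (mixLaw d lam) :=
    (tendstoInDistribution_iff_forall_integral_tendsto (fun n => (hT n).aemeasurable)
      aemeasurable_id).2 hTdist
  have hF : Continuous fun q => 1 - mixCDF d lam q :=
    continuous_const.sub (mixCDF_eq_cdf ▸ continuous_cdf)
  have hX := hTlim.continuous_comp hF
  have hlamHat' : TendstoInMeasure P lamHat atTop fun _ => lam := by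
    rw [tendstoInMeasure_iff_norm]
    intro ε hε
    refine tendsto_of_tendsto_of_tendsto_of_le_of_le tendsto_const_nhds
      (hprob (ε / 2) (by positivity)) (fun _ => bot_le) fun n => measure_mono fun ω hω => ?_
    simp only [mem_ofPred_eq] at hω ⊢
    linarith
  have hdiff := ((uniformContinuous_const.sub uniformContinuous_id :
    UniformContinuous fun x : ℝ => 1 - x).comp_tendstoUniformly
    (tendstoUniformly_mixCDF hd hlam)).tendstoInMeasure_sub hlamHat' T
  have hYlim := tendstoInDistribution_of_tendstoInMeasure_sub _ _ hX hdiff hY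
  intro g
  have hlimit : ∫ x, g (1 - mixCDF d lam x) ∂(mixLaw d lam) = ∫ x in Icc 0 1, g x := by
    rw [← map_one_sub_cdf (μ := mixLaw d lam), ← mixCDF_eq_cdf,
      integral_map hF.aemeasurable g.continuous.aestronglyMeasurable]
  rw [← hlimit]
  exact (tendstoInDistribution_iff_forall_integral_tendsto hY hX.aemeasurable_limit).1 hYlim g
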